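/- arXiv:2408.06859 — 6 statements merged into one kernel-verified Lean document; each statement's English description precedes it below -/
import Mathlib

section
/- In the discrete-time Sharing-a-drink (SAD) process with averaging parameter 1/2 on an arbitrary connected graph started from the Dirac profile at a vertex r, after any finite number of update steps, for every finite set S of vertices, the total amount of water in S is at most 1 - ∏_{v∈S} d(r,v)/(d(r,v)+1), where d denotes graph distance. -/
open Finset Filter

/-- One averaging update along the edge `⟨u,w⟩` with parameter `μ`. -/
def upd {V : Type*} [DecidableEq V] (u w : V) (μ : ℝ) (η : V → ℝ) : V → ℝ :=
  fun v => if v = u then (1 - μ) * η u + μ * η w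
    else if v = w then μ * η u + (1 - μ) * η w
    else η v

/-- The Dirac profile at `r`. -/
def delta {V : Type*} [DecidableEq V] (r : V) : V → ℝ := fun v => if v = r then 1 else 0

/-- Apply a finite sequence of updates (edge together with parameter) to a profile. -/
def applySteps {V : Type*} [DecidableEq V] (steps : List (V × V × ℝ)) (η : V → ℝ) : V → ℝ :=
  steps.foldl (fun acc s => upd s.1 s.2.1 s.2.2 acc) η

/-- The weight `d(r,v)/(d(r,v)+1)`. -/
noncomputable def fct {V : Type*} (G : SimpleGraph V) (r v : V) : ℝ :=
  (G.dist r v : ℝ) / (G.dist r v + 1)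

lemma fct_nonneg {V : Type*} (G : SimpleGraph V) (r v : V) : 0 ≤ fct G r v := by
  unfold fct; positivity

lemma fct_le_one {V : Type*} (G : SimpleGraph V) (r v : V) : fct G r v ≤ 1 := by
  unfold fct
  rw [div_le_one (by positivity)]
  linarith

lemma key_ineq (a b : ℕ) (h : a ≤ b + 1) :
    (a : ℝ) / (a + 1) ≤ (1 + (a : ℝ) / (a + 1) * ((b : ℝ) / (b + 1))) / 2 := by
  have ha : (0:ℝ) < (a:ℝ) + 1 := by positivity
  have hb : (0:ℝ) < (b:ℝ) + 1 := by positivity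
  have h' : (a:ℝ) ≤ (b:ℝ) + 1 := by exact_mod_cast h
  rw [div_mul_div_comm, div_le_div_iff₀ ha two_pos, ← sub_nonneg]
  have e : (1 + (a:ℝ) * b / ((a + 1) * (b + 1))) * (a + 1) - a * 2 =
      ((b:ℝ) + 1 - a) / (b + 1) := by
    field_simp
    ring
  rw [e]
  exact div_nonneg (by linarith) (le_of_lt hb)

lemma upd_comm {V : Type*} [DecidableEq V] (u w : V) (η : V → ℝ) :
    upd u w (1/2) η = upd w u (1/2) η := by
  funext v
  simp only [upd]
  split_ifs <;> subst_vars <;> ring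

/-- The main step case: `u ∈ S`, `w ∉ S`. -/
lemma step_case {V : Type*} [DecidableEq V] {G : SimpleGraph V} (hG : G.Connected)
    (r u w : V) (huw : G.Adj u w) (η : V → ℝ)
    (hInv : ∀ S : Finset V, ∑ v ∈ S, η v ≤ 1 - ∏ v ∈ S, fct G r v)
    (S : Finset V) (hu : u ∈ S) (hw : w ∉ S) :
    ∑ v ∈ S, upd u w (1/2) η v ≤ 1 - ∏ v ∈ S, fct G r v := by
  have hne : u ≠ w := huw.ne
  set A : ℝ := ∑ v ∈ S.erase u, η v with hA
  set P : ℝ := ∏ v ∈ S.erase u, fct G r v with hP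
  have hPnn : 0 ≤ P := Finset.prod_nonneg fun v _ => fct_nonneg G r v
  -- compute the new sum over S
  have hsum : ∑ v ∈ S, upd u w (1/2) η v = ((1:ℝ)/2 * η u + 1/2 * η w) + A := by
    rw [← Finset.add_sum_erase _ _ hu]
    congr 1
    · have e1 : upd u w (1/2) η u = (1 - (1/2:ℝ)) * η u + (1/2) * η w := if_pos rfl
      rw [e1]; ring
    · apply Finset.sum_congr rfl
      intro v hv
      have hvu : v ≠ u := Finset.ne_of_mem_erase hv
      have hvw : v ≠ w := fun h => hw (h ▸ Finset.mem_of_mem_erase hv)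
      simp [upd, hvu, hvw]
  -- bound from the invariant for `insert w S`
  have h1 : η w + (η u + A) ≤ 1 - fct G r w * (fct G r u * P) := by
    have := hInv (insert w S)
    rwa [Finset.sum_insert hw, Finset.prod_insert hw,
      ← Finset.add_sum_erase _ _ hu, ← Finset.mul_prod_erase _ _ hu] at this
  -- bound from the invariant for `S.erase u`
  have h2 : A ≤ 1 - P := hInv (S.erase u)
  -- the key inequality on the weights
  have hdist : G.dist r u ≤ G.dist r w + 1 := by
    have ht := hG.dist_triangle (u := r) (v := w) (w := u)
    have hd1 : G.dist w u = 1 := SimpleGraph.dist_eq_one_iff_adj.mpr huw.symm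
    omega
  have hk : fct G r u ≤ (1 + fct G r u * fct G r w) / 2 :=
    key_ineq (G.dist r u) (G.dist r w) hdist
  have hm : fct G r u * P ≤ (1 + fct G r u * fct G r w) / 2 * P :=
    mul_le_mul_of_nonneg_right hk hPnn
  rw [hsum, ← Finset.mul_prod_erase _ _ hu, ← hP]
  nlinarith [h1, h2, hm]

/-- One averaging step with parameter `1/2` along an edge preserves the invariant. -/
lemma step_all {V : Type*} [DecidableEq V] {G : SimpleGraph V} (hG : G.Connected)
    (r u w : V) (huw : G.Adj u w) (η : V → ℝ)
    (hInv : ∀ S : Finset V, ∑ v ∈ S, η v ≤ 1 - ∏ v ∈ S, fct G r v)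
    (S : Finset V) :
    ∑ v ∈ S, upd u w (1/2) η v ≤ 1 - ∏ v ∈ S, fct G r v := by
  have hne : u ≠ w := huw.ne
  by_cases hu : u ∈ S <;> by_cases hw : w ∈ S
  · -- both endpoints in S: the sum is unchanged
    have hsub : ({u, w} : Finset V) ⊆ S := by
      intro x hx
      rcases Finset.mem_insert.mp hx with h | h
      · exact h ▸ hu
      · exact (Finset.mem_singleton.mp h) ▸ hw
    have hzero : ∀ x ∈ S, x ∉ ({u, w} : Finset V) →
        upd u w (1/2) η x - η x = 0 := by
      intro x _ hx
      simp only [Finset.mem_insert, Finset.mem_singleton, not_or] at hx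
      simp [upd, hx.1, hx.2]
    have hpair : ∑ x ∈ ({u, w} : Finset V), (upd u w (1/2) η x - η x) = 0 := by
      rw [Finset.sum_pair hne]
      have e1 : upd u w (1/2) η u = (1 - (1/2:ℝ)) * η u + (1/2) * η w := if_pos rfl
      have e2 : upd u w (1/2) η w = (1/2:ℝ) * η u + (1 - (1/2:ℝ)) * η w := by
        show (if w = u then _ else if w = w then _ else _) = _
        rw [if_neg (Ne.symm hne), if_pos rfl]
      rw [e1, e2]; ring
    have heq : ∑ v ∈ S, upd u w (1/2) η v = ∑ v ∈ S, η v := by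
      have := Finset.sum_subset hsub hzero
      rw [hpair] at this
      have hsub' : ∑ v ∈ S, (upd u w (1/2) η v - η v) = 0 := this.symm
      rw [Finset.sum_sub_distrib] at hsub'
      linarith
    rw [heq]; exact hInv S
  · exact step_case hG r u w huw η hInv S hu hw
  · rw [upd_comm]; exact step_case hG r w u huw.symm η hInv S hw hu
  · have heq : ∑ v ∈ S, upd u w (1/2) η v = ∑ v ∈ S, η v := by
      apply Finset.sum_congr rfl
      intro v hv
      have hvu : v ≠ u := fun h => hu (h ▸ hv)
      have hvw : v ≠ w := fun h => hw (h ▸ hv)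
      simp [upd, hvu, hvw]
    rw [heq]; exact hInv S

lemma main_aux {V : Type*} [DecidableEq V] {G : SimpleGraph V} (hG : G.Connected)
    (r : V) (steps : List (V × V × ℝ))
    (hsteps : ∀ s ∈ steps, G.Adj s.1 s.2.1 ∧ s.2.2 = (1:ℝ)/2) (η : V → ℝ)
    (hInv : ∀ S : Finset V, ∑ v ∈ S, η v ≤ 1 - ∏ v ∈ S, fct G r v)
    (S : Finset V) :
    ∑ v ∈ S, applySteps steps η v ≤ 1 - ∏ v ∈ S, fct G r v := by
  induction steps generalizing η with
  | nil => exact hInv S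
  | cons s rest ih =>
    have hstep := hsteps s List.mem_cons_self
    have : applySteps (s :: rest) η = applySteps rest (upd s.1 s.2.1 s.2.2 η) := rfl
    rw [this]
    refine ih (fun t ht => hsteps t (List.mem_cons_of_mem s ht)) _ (fun T => ?_)
    rw [hstep.2]
    exact step_all hG r s.1 s.2.1 hstep.1 η hInv T

theorem sad_finset_bound {V : Type*} [DecidableEq V] (G : SimpleGraph V)
    (hG : G.Connected) (r : V) (steps : List (V × V × ℝ))
    (hsteps : ∀ s ∈ steps, G.Adj s.1 s.2.1 ∧ s.2.2 = (1:ℝ)/2)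
    (S : Finset V) :
    ∑ v ∈ S, applySteps steps (delta r) v ≤
      1 - ∏ v ∈ S, (G.dist r v : ℝ) / (G.dist r v + 1) := by
  have base : ∀ T : Finset V, ∑ v ∈ T, delta r v ≤ 1 - ∏ v ∈ T, fct G r v := by
    intro T
    have hsum : ∑ v ∈ T, delta r v = if r ∈ T then (1:ℝ) else 0 := by
      simp [delta, Finset.sum_ite_eq' T r (fun _ => (1:ℝ))]
    rw [hsum]
    by_cases hr : r ∈ T
    · rw [if_pos hr]
      have : ∏ v ∈ T, fct G r v = 0 :=
        Finset.prod_eq_zero hr (by simp [fct, SimpleGraph.dist_self])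
      rw [this]; norm_num
    · rw [if_neg hr]
      have : ∏ v ∈ T, fct G r v ≤ 1 :=
        Finset.prod_le_one (fun v _ => fct_nonneg G r v) (fun v _ => fct_le_one G r v)
      linarith
  exact main_aux hG r steps hsteps (delta r) base S
end

section
/- In the discrete-time SAD process with averaging parameter 1/2 on a connected graph started from the Dirac profile at vertex r, after any finite number of update steps, the amount of water at any vertex v is at most 1/(d(r,v)+1). -/
open Finset Filter

/-- Key step lemma: the invariant `∑_{x∈S} ξ x ≤ 1 - ∏_{x∈S} θ x` is preserved by
one half-averaging update, provided `θ` satisfies the edge compatibility conditions. -/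
lemma key_step {V : Type*} [DecidableEq V] (θ ξ : V → ℝ) (hθ0 : ∀ x, 0 ≤ θ x)
    (u w : V) (huw : u ≠ w)
    (hedge : θ u * (1 - θ w) ≤ 1 - θ u) (hedge' : θ w * (1 - θ u) ≤ 1 - θ w)
    (hξ : ∀ S : Finset V, ∑ x ∈ S, ξ x ≤ 1 - ∏ x ∈ S, θ x) :
    ∀ S : Finset V, ∑ x ∈ S, upd u w (1/2) ξ x ≤ 1 - ∏ x ∈ S, θ x := by
  intro S
  by_cases hu : u ∈ S <;> by_cases hw : w ∈ S
  · -- both in S : the sum is unchanged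
    have hw' : w ∈ S.erase u := Finset.mem_erase.2 ⟨fun h => huw h.symm, hw⟩
    have tail : ∑ x ∈ (S.erase u).erase w, upd u w (1/2) ξ x
        = ∑ x ∈ (S.erase u).erase w, ξ x := by
      refine Finset.sum_congr rfl fun x hx => ?_
      have hxw : x ≠ w := (Finset.mem_erase.1 hx).1
      have hxu : x ≠ u := (Finset.mem_erase.1 (Finset.mem_erase.1 hx).2).1
      simp [upd, hxu, hxw]
    have e1 : ∑ x ∈ S, upd u w (1/2) ξ x
        = upd u w (1/2) ξ u + (upd u w (1/2) ξ w + ∑ x ∈ (S.erase u).erase w, upd u w (1/2) ξ x) := by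
      rw [← Finset.add_sum_erase _ _ hu, ← Finset.add_sum_erase _ _ hw']
    have e2 : ∑ x ∈ S, ξ x = ξ u + (ξ w + ∑ x ∈ (S.erase u).erase w, ξ x) := by
      rw [← Finset.add_sum_erase _ _ hu, ← Finset.add_sum_erase _ _ hw']
    have hval : upd u w (1/2) ξ u + upd u w (1/2) ξ w = ξ u + ξ w := by
      simp only [upd, if_true, eq_self_iff_true, if_neg huw.symm]
      ring
    have : ∑ x ∈ S, upd u w (1/2) ξ x = ∑ x ∈ S, ξ x := by
      rw [e1, e2, ← add_assoc, ← add_assoc, hval, tail]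
    rw [this]; exact hξ S
  · -- u ∈ S, w ∉ S
    have tail : ∑ x ∈ S.erase u, upd u w (1/2) ξ x = ∑ x ∈ S.erase u, ξ x := by
      refine Finset.sum_congr rfl fun x hx => ?_
      have hxu : x ≠ u := (Finset.mem_erase.1 hx).1
      have hxw : x ≠ w := fun h => hw (h ▸ (Finset.mem_erase.1 hx).2)
      simp [upd, hxu, hxw]
    have e1 : ∑ x ∈ S, upd u w (1/2) ξ x
        = ((1:ℝ) - 1/2) * ξ u + (1/2) * ξ w + ∑ x ∈ S.erase u, ξ x := by
      rw [← Finset.add_sum_erase _ _ hu, tail]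
      simp [upd]
    have hins : ∑ x ∈ insert w S, ξ x = ξ w + ∑ x ∈ S, ξ x := Finset.sum_insert hw
    have hSer : ∑ x ∈ S, ξ x = ξ u + ∑ x ∈ S.erase u, ξ x :=
      (Finset.add_sum_erase _ _ hu).symm
    have e3 : ∑ x ∈ S, upd u w (1/2) ξ x
        = (∑ x ∈ insert w S, ξ x + ∑ x ∈ S.erase u, ξ x) / 2 := by
      rw [e1, hins, hSer]; ring
    have b1 := hξ (insert w S)
    have b2 := hξ (S.erase u)
    have p1 : ∏ x ∈ insert w S, θ x = θ w * (θ u * ∏ x ∈ S.erase u, θ x) := by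
      rw [Finset.prod_insert hw, Finset.mul_prod_erase _ _ hu]
    have p2 : ∏ x ∈ S, θ x = θ u * ∏ x ∈ S.erase u, θ x :=
      (Finset.mul_prod_erase _ _ hu).symm
    have hP : (0:ℝ) ≤ ∏ x ∈ S.erase u, θ x := Finset.prod_nonneg fun x _ => hθ0 x
    rw [e3, p2]
    rw [p1] at b1
    set P := ∏ x ∈ S.erase u, θ x with hPdef
    nlinarith [mul_nonneg hP (sub_nonneg.2 hedge)]
  · -- w ∈ S, u ∉ S
    have tail : ∑ x ∈ S.erase w, upd u w (1/2) ξ x = ∑ x ∈ S.erase w, ξ x := by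
      refine Finset.sum_congr rfl fun x hx => ?_
      have hxw : x ≠ w := (Finset.mem_erase.1 hx).1
      have hxu : x ≠ u := fun h => hu (h ▸ (Finset.mem_erase.1 hx).2)
      simp [upd, hxu, hxw]
    have e1 : ∑ x ∈ S, upd u w (1/2) ξ x
        = (1/2) * ξ u + ((1:ℝ) - 1/2) * ξ w + ∑ x ∈ S.erase w, ξ x := by
      rw [← Finset.add_sum_erase _ _ hw, tail]
      simp [upd, huw.symm]
    have hins : ∑ x ∈ insert u S, ξ x = ξ u + ∑ x ∈ S, ξ x := Finset.sum_insert hu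
    have hSer : ∑ x ∈ S, ξ x = ξ w + ∑ x ∈ S.erase w, ξ x :=
      (Finset.add_sum_erase _ _ hw).symm
    have e3 : ∑ x ∈ S, upd u w (1/2) ξ x
        = (∑ x ∈ insert u S, ξ x + ∑ x ∈ S.erase w, ξ x) / 2 := by
      rw [e1, hins, hSer]; ring
    have b1 := hξ (insert u S)
    have b2 := hξ (S.erase w)
    have p1 : ∏ x ∈ insert u S, θ x = θ u * (θ w * ∏ x ∈ S.erase w, θ x) := by
      rw [Finset.prod_insert hu, Finset.mul_prod_erase _ _ hw]
    have p2 : ∏ x ∈ S, θ x = θ w * ∏ x ∈ S.erase w, θ x :=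
      (Finset.mul_prod_erase _ _ hw).symm
    have hP : (0:ℝ) ≤ ∏ x ∈ S.erase w, θ x := Finset.prod_nonneg fun x _ => hθ0 x
    rw [e3, p2]
    rw [p1] at b1
    set P := ∏ x ∈ S.erase w, θ x with hPdef
    nlinarith [mul_nonneg hP (sub_nonneg.2 hedge')]
  · -- neither in S : unchanged
    have : ∑ x ∈ S, upd u w (1/2) ξ x = ∑ x ∈ S, ξ x := by
      refine Finset.sum_congr rfl fun x hx => ?_
      have hxu : x ≠ u := fun h => hu (h ▸ hx)
      have hxw : x ≠ w := fun h => hw (h ▸ hx)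
      simp [upd, hxu, hxw]
    rw [this]; exact hξ S

theorem sad_pointwise_bound {V : Type*} [DecidableEq V] (G : SimpleGraph V)
    (hG : G.Connected) (r : V) (steps : List (V × V × ℝ))
    (hsteps : ∀ s ∈ steps, G.Adj s.1 s.2.1 ∧ s.2.2 = (1:ℝ)/2)
    (v : V) :
    applySteps steps (delta r) v ≤ 1 / (G.dist r v + 1) := by
  classical
  set θ : V → ℝ := fun x => (G.dist r x : ℝ) / (G.dist r x + 1) with hθdef
  have hdpos : ∀ x : V, (0:ℝ) < (G.dist r x : ℝ) + 1 := fun x => by positivity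
  have hθ0 : ∀ x, 0 ≤ θ x := fun x => by
    simp only [hθdef]
    exact div_nonneg (Nat.cast_nonneg _) (hdpos x).le
  have hθcompl : ∀ x : V, 1 - θ x = 1 / ((G.dist r x : ℝ) + 1) := fun x => by
    simp only [hθdef]
    field_simp
    ring
  -- edge condition: if Adj u w then θ u * (1 - θ w) ≤ 1 - θ u
  have hedge : ∀ u w : V, G.Adj u w → θ u * (1 - θ w) ≤ 1 - θ u := by
    intro u w huw
    have hdist : G.dist r u ≤ G.dist r w + 1 := by
      have h1 : G.dist w u = 1 := SimpleGraph.dist_eq_one_iff_adj.2 huw.symm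
      calc G.dist r u ≤ G.dist r w + G.dist w u := hG.dist_triangle
        _ = G.dist r w + 1 := by rw [h1]
    have hdistR : (G.dist r u : ℝ) ≤ (G.dist r w : ℝ) + 1 := by
      exact_mod_cast hdist
    rw [hθcompl w, hθcompl u]
    simp only [hθdef]
    rw [div_mul_div_comm, div_le_div_iff₀ (by positivity) (hdpos u)]
    have h1 := hdpos u
    have h2 := hdpos w
    nlinarith [Nat.cast_nonneg (α := ℝ) (G.dist r u), Nat.cast_nonneg (α := ℝ) (G.dist r w)]
  -- the invariant holds initially
  have hinit : ∀ S : Finset V, ∑ x ∈ S, delta r x ≤ 1 - ∏ x ∈ S, θ x := by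
    intro S
    have hsum : ∑ x ∈ S, delta r x = if r ∈ S then 1 else 0 := by
      simp [delta, Finset.sum_ite_eq' S r (fun _ => (1:ℝ))]
    rw [hsum]
    by_cases hr : r ∈ S
    · have hθr : θ r = 0 := by simp [hθdef, SimpleGraph.dist_self]
      have : ∏ x ∈ S, θ x = 0 := Finset.prod_eq_zero hr hθr
      rw [if_pos hr, this]; norm_num
    · rw [if_neg hr]
      have hprod : ∏ x ∈ S, θ x ≤ 1 := by
        apply Finset.prod_le_one (fun x _ => hθ0 x)
        intro x _
        simp only [hθdef]
        rw [div_le_one (hdpos x)]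
        linarith
      linarith
  -- invariant propagates through the steps
  have main : ∀ (l : List (V × V × ℝ)) (η : V → ℝ),
      (∀ s ∈ l, G.Adj s.1 s.2.1 ∧ s.2.2 = (1:ℝ)/2) →
      (∀ S : Finset V, ∑ x ∈ S, η x ≤ 1 - ∏ x ∈ S, θ x) →
      ∀ S : Finset V, ∑ x ∈ S, applySteps l η x ≤ 1 - ∏ x ∈ S, θ x := by
    intro l
    induction l with
    | nil => intro η _ hη S; simpa [applySteps] using hη S
    | cons s rest ih =>
      intro η hl hη S
      have hs := hl s List.mem_cons_self
      have hrest : ∀ s' ∈ rest, G.Adj s'.1 s'.2.1 ∧ s'.2.2 = (1:ℝ)/2 :=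
        fun s' hs' => hl s' (List.mem_cons_of_mem _ hs')
      have hstep : ∀ S : Finset V, ∑ x ∈ S, upd s.1 s.2.1 s.2.2 η x ≤ 1 - ∏ x ∈ S, θ x := by
        rw [hs.2]
        exact key_step θ η hθ0 s.1 s.2.1 hs.1.ne
          (hedge s.1 s.2.1 hs.1) (hedge s.2.1 s.1 hs.1.symm) hη
      have : applySteps (s :: rest) η = applySteps rest (upd s.1 s.2.1 s.2.2 η) := rfl
      rw [this]
      exact ih _ hrest hstep S
  have := main steps (delta r) hsteps hinit {v}
  simpa [hθcompl v] using this
end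

section
/- Duality of the averaging process: let G=(V,E) be a finite graph, η₀: V → ℝ an initial profile, and φ = ([e₁,μ₁],…,[e_n,μ_n]) a finite sequence of edge updates. Let η_n be the profile obtained by applying the updates of φ in order to η₀. Fix r ∈ V, and let ξ_n be the profile obtained by applying the updates in reversed order ([e_n,μ_n],…,[e₁,μ₁]) to the Dirac profile δ_r. Then η_n(r) = ∑_{v∈V} ξ_n(v)·η₀(v). -/
open Finset Filter

lemma upd_self {V : Type*} [DecidableEq V] (u : V) (μ : ℝ) (ξ : V → ℝ) :
    upd u u μ ξ = ξ := by
  funext v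
  unfold upd
  by_cases h : v = u <;> simp [h] <;> ring_nf

lemma upd_sym {V : Type*} [Fintype V] [DecidableEq V] (u w : V) (μ : ℝ)
    (ξ η : V → ℝ) :
    ∑ v, upd u w μ ξ v * η v = ∑ v, ξ v * upd u w μ η v := by
  by_cases huw : u = w
  · subst huw; rw [upd_self, upd_self]
  have hw : w ∈ Finset.univ.erase u := by simp [Ne.symm huw]
  rw [← Finset.add_sum_erase _ _ (Finset.mem_univ u),
      ← Finset.add_sum_erase _ _ hw,
      ← Finset.add_sum_erase _ (fun v => ξ v * upd u w μ η v) (Finset.mem_univ u),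
      ← Finset.add_sum_erase _ (fun v => ξ v * upd u w μ η v) hw]
  have hrest : ∑ v ∈ (Finset.univ.erase u).erase w, upd u w μ ξ v * η v
      = ∑ v ∈ (Finset.univ.erase u).erase w, ξ v * upd u w μ η v := by
    apply Finset.sum_congr rfl
    intro v hv
    simp only [Finset.mem_erase] at hv
    simp [upd, hv.1, hv.2.1]
  rw [hrest]
  simp [upd, huw, Ne.symm huw]
  ring

lemma applySteps_cons {V : Type*} [DecidableEq V] (s : V × V × ℝ)
    (steps : List (V × V × ℝ)) (η : V → ℝ) :
    applySteps (s :: steps) η = applySteps steps (upd s.1 s.2.1 s.2.2 η) := rfl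

lemma applySteps_append {V : Type*} [DecidableEq V] (l₁ l₂ : List (V × V × ℝ)) (η : V → ℝ) :
    applySteps (l₁ ++ l₂) η = applySteps l₂ (applySteps l₁ η) := by
  simp [applySteps, List.foldl_append]

lemma duality_aux {V : Type*} [Fintype V] [DecidableEq V] (steps : List (V × V × ℝ)) :
    ∀ (ξ η : V → ℝ),
      ∑ v, applySteps steps.reverse ξ v * η v = ∑ v, ξ v * applySteps steps η v := by
  induction steps with
  | nil => intro ξ η; simp [applySteps]
  | cons s t ih =>
    intro ξ η
    rw [List.reverse_cons, applySteps_append, applySteps_cons]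
    show ∑ v, upd s.1 s.2.1 s.2.2 (applySteps t.reverse ξ) v * η v = _
    rw [upd_sym, ih]
    rfl

theorem averaging_duality {V : Type*} [Fintype V] [DecidableEq V] (G : SimpleGraph V)
    (η₀ : V → ℝ) (steps : List (V × V × ℝ))
    (hsteps : ∀ s ∈ steps, G.Adj s.1 s.2.1 ∧ s.2.2 ∈ Set.Icc (0:ℝ) (1/2))
    (r : V) :
    applySteps steps η₀ r =
      ∑ v, applySteps steps.reverse (delta r) v * η₀ v := by
  rw [duality_aux]
  simp [delta]
end

section
/- If in the averaging process an update along edge ⟨u,w⟩ with parameter μ ∈ (0,1/2] is performed on a profile η whose values satisfy η(x) < a for some vertices and η(y) > b for others with b − a ≥ δ > 0 and u, w lie on different sides of the gap (η(u) < a, η(w) > b), then the energy ∑_v η(v)² decreases by at least 2μ(1−μ)δ². -/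
open Finset Filter

theorem gap_update_energy_drop {V : Type*} [DecidableEq V] (u w : V) (huw : u ≠ w)
    (μ : ℝ) (hμ : μ ∈ Set.Ioc (0:ℝ) (1/2)) (η : V → ℝ)
    (hη : (Function.support η).Finite) (a b δ : ℝ) (hδ : 0 < δ)
    (hab : δ ≤ b - a) (hu : η u < a) (hw : b < η w) :
    2 * μ * (1 - μ) * δ ^ 2 ≤ (∑ᶠ v, (η v) ^ 2) - ∑ᶠ v, (upd u w μ η v) ^ 2 := by
  obtain ⟨hμ0, hμ2⟩ := hμ
  set s : Finset V := hη.toFinset ∪ {u, w} with hs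
  have husub : ({u, w} : Finset V) ⊆ s := Finset.subset_union_right
  have h1 : ∑ᶠ v, (η v) ^ 2 = ∑ v ∈ s, (η v) ^ 2 := by
    apply finsum_eq_sum_of_support_subset
    intro v hv
    simp only [Function.mem_support] at hv
    have : η v ≠ 0 := fun h => hv (by simp [h])
    simp [hs, this]
  have h2 : ∑ᶠ v, (upd u w μ η v) ^ 2 = ∑ v ∈ s, (upd u w μ η v) ^ 2 := by
    apply finsum_eq_sum_of_support_subset
    intro v hv
    simp only [Function.mem_support] at hv
    by_cases hvu : v = u
    · simp [hs, hvu]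
    by_cases hvw : v = w
    · simp [hs, hvw]
    have : upd u w μ η v = η v := by simp [upd, hvu, hvw]
    rw [this] at hv
    have : η v ≠ 0 := fun h => hv (by simp [h])
    simp [hs, this]
  rw [h1, h2, ← Finset.sum_sub_distrib]
  have h3 : ∑ v ∈ s, ((η v) ^ 2 - (upd u w μ η v) ^ 2)
      = ∑ v ∈ ({u, w} : Finset V), ((η v) ^ 2 - (upd u w μ η v) ^ 2) := by
    symm
    apply Finset.sum_subset husub
    intro v _ hv
    have hvu : v ≠ u := fun h => hv (by simp [h])
    have hvw : v ≠ w := fun h => hv (by simp [h])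
    simp [upd, hvu, hvw]
  rw [h3, Finset.sum_pair huw]
  have hupu : upd u w μ η u = (1 - μ) * η u + μ * η w := by simp [upd]
  have hupw : upd u w μ η w = μ * η u + (1 - μ) * η w := by simp [upd, huw.symm]
  rw [hupu, hupw]
  have hd : δ ≤ η w - η u := by linarith
  nlinarith [mul_nonneg (le_of_lt (mul_pos hμ0 (by linarith : (0:ℝ) < 1 - μ)))
    (mul_nonneg (by linarith : (0:ℝ) ≤ η w - η u - δ) (by linarith : (0:ℝ) ≤ η w - η u + δ))]
end

section
/- On a finite connected graph with n vertices, starting from η₀ = δ_u, if in an infinite sequence of averaging updates with fixed μ ∈ (0,1/2] every edge appears infinitely often in the update sequence, then max_v η_k(v) → 1/n as k → ∞. -/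
set_option linter.unusedSectionVars false

open Finset Filter

section Aux

variable {V : Type*} [Fintype V] [DecidableEq V]

lemma upd_fst (x y : V) (μ : ℝ) (η : V → ℝ) :
    upd x y μ η x = (1 - μ) * η x + μ * η y := by simp [upd]

lemma upd_snd {x y : V} (hxy : x ≠ y) (μ : ℝ) (η : V → ℝ) :
    upd x y μ η y = μ * η x + (1 - μ) * η y := by simp [upd, hxy.symm]

lemma upd_other {x y v : V} (hvx : v ≠ x) (hvy : v ≠ y) (μ : ℝ) (η : V → ℝ) :
    upd x y μ η v = η v := by simp [upd, hvx, hvy]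

lemma upd_comm_s12 (x y : V) (μ : ℝ) (η : V → ℝ) : upd x y μ η = upd y x μ η := by
  by_cases hxy : x = y
  · subst hxy; rfl
  funext v
  by_cases h1 : v = x
  · subst h1; rw [upd_fst, upd_snd (Ne.symm hxy)]; ring
  by_cases h2 : v = y
  · subst h2; rw [upd_snd hxy, upd_fst]; ring
  · rw [upd_other h1 h2, upd_other h2 h1]

noncomputable def Smin (η : V → ℝ) (j : ℕ) : ℝ :=
  if h : ((univ : Finset V).powersetCard j).Nonempty
  then (univ.powersetCard j).inf' h (fun T => ∑ v ∈ T, η v) else 0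

lemma powCard_ne {j : ℕ} (hj : j ≤ Fintype.card V) :
    ((univ : Finset V).powersetCard j).Nonempty :=
  Finset.powersetCard_nonempty.2 (by simpa using hj)

lemma Smin_le (η : V → ℝ) {j : ℕ} {T : Finset V} (hT : T.card = j) :
    Smin η j ≤ ∑ v ∈ T, η v := by
  have hj : j ≤ Fintype.card V := hT ▸ (by simpa using T.card_le_univ)
  rw [Smin, dif_pos (powCard_ne hj)]
  exact Finset.inf'_le _ (Finset.mem_powersetCard.2 ⟨T.subset_univ, hT⟩)

lemma le_Smin {η : V → ℝ} {j : ℕ} (hj : j ≤ Fintype.card V) {c : ℝ}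
    (h : ∀ T : Finset V, T.card = j → c ≤ ∑ v ∈ T, η v) : c ≤ Smin η j := by
  rw [Smin, dif_pos (powCard_ne hj)]
  exact Finset.le_inf' _ _ fun T hT => h T (Finset.mem_powersetCard.1 hT).2

lemma exists_Smin (η : V → ℝ) {j : ℕ} (hj : j ≤ Fintype.card V) :
    ∃ T : Finset V, T.card = j ∧ Smin η j = ∑ v ∈ T, η v := by
  rw [Smin, dif_pos (powCard_ne hj)]
  obtain ⟨T, hT, h⟩ := Finset.exists_mem_eq_inf' (powCard_ne hj) (fun T => ∑ v ∈ T, η v)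
  exact ⟨T, (Finset.mem_powersetCard.1 hT).2, h⟩

lemma sum_upd_of_mem_mem {x y : V} (hxy : x ≠ y) {T : Finset V} (hx : x ∈ T) (hy : y ∈ T)
    (μ : ℝ) (η : V → ℝ) :
    ∑ v ∈ T, upd x y μ η v = ∑ v ∈ T, η v := by
  have hx' : x ∈ T.erase y := Finset.mem_erase.2 ⟨hxy, hx⟩
  rw [← Finset.sum_erase_add T _ hy, ← Finset.sum_erase_add (T.erase y) _ hx',
      ← Finset.sum_erase_add T η hy, ← Finset.sum_erase_add (T.erase y) η hx']
  have hc : ∀ v ∈ (T.erase y).erase x, upd x y μ η v = η v := by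
    intro v hv
    exact upd_other (Finset.mem_erase.1 hv).1 (Finset.mem_erase.1 (Finset.mem_erase.1 hv).2).1 μ η
  rw [Finset.sum_congr rfl hc, upd_fst, upd_snd hxy]
  ring

lemma sum_upd_of_mem_not_mem {x y : V} {T : Finset V} (hx : x ∈ T) (hy : y ∉ T)
    (μ : ℝ) (η : V → ℝ) :
    ∑ v ∈ T, upd x y μ η v = ∑ v ∈ T, η v + μ * (η y - η x) := by
  rw [← Finset.sum_erase_add T _ hx, ← Finset.sum_erase_add T η hx]
  have hc : ∀ v ∈ T.erase x, upd x y μ η v = η v := by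
    intro v hv
    exact upd_other (Finset.mem_erase.1 hv).1
      (fun h => hy (by rw [← h]; exact (Finset.mem_erase.1 hv).2)) μ η
  rw [Finset.sum_congr rfl hc, upd_fst]
  ring

lemma sum_upd_of_not_mem_mem {x y : V} {T : Finset V} (hx : x ∉ T) (hy : y ∈ T)
    (μ : ℝ) (η : V → ℝ) :
    ∑ v ∈ T, upd x y μ η v
      = ∑ v ∈ insert x (T.erase y), η v + (1 - μ) * (η y - η x) := by
  have hxy : x ≠ y := fun h => hx (by rwa [h])
  have hx' : x ∉ T.erase y := fun h => hx (Finset.mem_of_mem_erase h)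
  rw [← Finset.sum_erase_add T _ hy, Finset.sum_insert hx']
  have hc : ∀ v ∈ T.erase y, upd x y μ η v = η v := by
    intro v hv
    exact upd_other (fun h => hx (by rw [← h]; exact Finset.mem_of_mem_erase hv))
      (Finset.mem_erase.1 hv).1 μ η
  rw [Finset.sum_congr rfl hc, upd_snd hxy]
  ring

lemma sum_upd_of_not_mem_not_mem {x y : V} {T : Finset V} (hx : x ∉ T) (hy : y ∉ T)
    (μ : ℝ) (η : V → ℝ) :
    ∑ v ∈ T, upd x y μ η v = ∑ v ∈ T, η v :=
  Finset.sum_congr rfl fun v hv =>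
    upd_other (fun h => hx (by rw [← h]; exact hv)) (fun h => hy (by rw [← h]; exact hv)) μ η

lemma Smin_le_upd {x y : V} (hxy : x ≠ y) {μ : ℝ} (hμ0 : 0 ≤ μ) (hμ1 : μ ≤ 1)
    {j : ℕ} (hj : j ≤ Fintype.card V) (η : V → ℝ) :
    Smin η j ≤ Smin (upd x y μ η) j := by
  apply le_Smin hj
  intro T hT
  by_cases hx : x ∈ T <;> by_cases hy : y ∈ T
  · rw [sum_upd_of_mem_mem hxy hx hy]; exact Smin_le η hT
  · rw [sum_upd_of_mem_not_mem hx hy]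
    have h1 : Smin η j ≤ ∑ v ∈ T, η v := Smin_le η hT
    have hyT : y ∉ T.erase x := fun h => hy (Finset.mem_of_mem_erase h)
    have hcard : (insert y (T.erase x)).card = j := by
      rw [Finset.card_insert_of_notMem hyT, Finset.card_erase_of_mem hx, hT]
      have : 1 ≤ j := hT ▸ Finset.card_pos.2 ⟨x, hx⟩
      omega
    have h2 : Smin η j ≤ ∑ v ∈ insert y (T.erase x), η v := Smin_le η hcard
    rw [Finset.sum_insert hyT] at h2
    have he : ∑ v ∈ T.erase x, η v + η x = ∑ v ∈ T, η v := Finset.sum_erase_add T η hx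
    nlinarith [mul_le_mul_of_nonneg_left h1 (by linarith : (0:ℝ) ≤ 1 - μ),
      mul_le_mul_of_nonneg_left h2 hμ0]
  · rw [sum_upd_of_not_mem_mem hx hy]
    have h1 : Smin η j ≤ ∑ v ∈ T, η v := Smin_le η hT
    have hxT : x ∉ T.erase y := fun h => hx (Finset.mem_of_mem_erase h)
    have hcard : (insert x (T.erase y)).card = j := by
      rw [Finset.card_insert_of_notMem hxT, Finset.card_erase_of_mem hy, hT]
      have : 1 ≤ j := hT ▸ Finset.card_pos.2 ⟨y, hy⟩
      omega
    have h2 : Smin η j ≤ ∑ v ∈ insert x (T.erase y), η v := Smin_le η hcard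
    have he : ∑ v ∈ T.erase y, η v + η y = ∑ v ∈ T, η v := Finset.sum_erase_add T η hy
    rw [Finset.sum_insert hxT] at h2 ⊢
    nlinarith [mul_le_mul_of_nonneg_left h1 hμ0,
      mul_le_mul_of_nonneg_left h2 (by linarith : (0:ℝ) ≤ 1 - μ)]
  · rw [sum_upd_of_not_mem_not_mem hx hy]; exact Smin_le η hT

lemma Smin_succ_le (η : V → ℝ) {j : ℕ} {A : Finset V} (hA : j + 1 ≤ A.card)
    {θ : ℝ} (hlow : ∀ v ∈ A, η v ≤ θ) :
    Smin η (j + 1) ≤ Smin η j + θ := by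
  have hjn : j ≤ Fintype.card V := by
    have : A.card ≤ Fintype.card V := by simpa using A.card_le_univ
    omega
  obtain ⟨T, hTc, hTe⟩ := exists_Smin η hjn
  have hex : ∃ a ∈ A, a ∉ T := by
    by_contra h
    push_neg at h
    have := Finset.card_le_card h
    omega
  obtain ⟨a, haA, haT⟩ := hex
  calc Smin η (j + 1) ≤ ∑ v ∈ insert a T, η v :=
        Smin_le η (by rw [Finset.card_insert_of_notMem haT, hTc])
    _ = ∑ v ∈ T, η v + η a := by rw [Finset.sum_insert haT]; ring
    _ ≤ Smin η j + θ := by rw [← hTe]; exact add_le_add le_rfl (hlow a haA)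

lemma Smin_succ_ge (η : V → ℝ) {j : ℕ} (hjn : j + 1 ≤ Fintype.card V)
    {A : Finset V} (hA : A.card ≤ j) {θ : ℝ} (hhigh : ∀ v ∉ A, θ ≤ η v) :
    Smin η j + θ ≤ Smin η (j + 1) := by
  apply le_Smin hjn
  intro T hT
  have hex : ∃ t ∈ T, t ∉ A := by
    by_contra h
    push_neg at h
    have := Finset.card_le_card h
    omega
  obtain ⟨t, htT, htA⟩ := hex
  rw [← Finset.sum_erase_add T η htT]
  exact add_le_add (Smin_le η (by rw [Finset.card_erase_of_mem htT, hT]; omega)) (hhigh t htA)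

lemma Smin_jump (η : V → ℝ) {x y : V} {μ θ₁ θ₂ : ℝ} (hμ0 : 0 < μ) (hμ2 : μ ≤ 1/2)
    (hθ : θ₁ ≤ θ₂) {j : ℕ} (hjn : j + 1 ≤ Fintype.card V) (hj1 : 1 ≤ j)
    {A : Finset V} (hA : A.card = j)
    (hlow : ∀ v ∈ A, η v ≤ θ₁) (hhigh : ∀ v ∉ A, θ₂ ≤ η v)
    (hx : x ∈ A) (hy : y ∉ A) :
    Smin η j + μ * (θ₂ - θ₁) ≤ Smin (upd x y μ η) j := by
  obtain ⟨m, rfl⟩ : ∃ m, j = m + 1 := ⟨j - 1, by omega⟩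
  have hxy : x ≠ y := fun h => hy (h ▸ hx)
  have hS : Smin η (m + 1) ≤ Smin η m + θ₁ :=
    Smin_succ_le η (by omega) hlow
  have hηx : η x ≤ θ₁ := hlow x hx
  have hηy : θ₂ ≤ η y := hhigh y hy
  have hμ1 : μ ≤ 1 := by linarith
  apply le_Smin (by omega)
  intro T hT
  by_cases hxT : x ∈ T <;> by_cases hyT : y ∈ T
  · rw [sum_upd_of_mem_mem hxy hxT hyT, ← Finset.sum_erase_add T η hyT]
    have h1 : Smin η m ≤ ∑ v ∈ T.erase y, η v :=
      Smin_le η (by rw [Finset.card_erase_of_mem hyT, hT]; omega)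
    nlinarith
  · rw [sum_upd_of_mem_not_mem hxT hyT]
    have h1 : Smin η (m + 1) ≤ ∑ v ∈ T, η v := Smin_le η hT
    nlinarith
  · rw [sum_upd_of_not_mem_mem hxT hyT]
    have hxT' : x ∉ T.erase y := fun h => hxT (Finset.mem_of_mem_erase h)
    have hcard : (insert x (T.erase y)).card = m + 1 := by
      rw [Finset.card_insert_of_notMem hxT', Finset.card_erase_of_mem hyT, hT]; omega
    have h1 : Smin η (m + 1) ≤ ∑ v ∈ insert x (T.erase y), η v := Smin_le η hcard
    nlinarith
  · rw [sum_upd_of_not_mem_not_mem hxT hyT]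
    have hex : ∃ t ∈ T, t ∉ A := by
      by_contra h
      push_neg at h
      have hsub : T ⊆ A.erase x := fun t ht =>
        Finset.mem_erase.2 ⟨fun hc => hxT (hc ▸ ht), h t ht⟩
      have := Finset.card_le_card hsub
      rw [Finset.card_erase_of_mem hx, hA, hT] at this
      omega
    obtain ⟨t, htT, htA⟩ := hex
    rw [← Finset.sum_erase_add T η htT]
    have h1 : Smin η m ≤ ∑ v ∈ T.erase t, η v :=
      Smin_le η (by rw [Finset.card_erase_of_mem htT, hT]; omega)
    have h2 : θ₂ ≤ η t := hhigh t htA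
    nlinarith

lemma upd_bounds {x y : V} {μ : ℝ} (hμ0 : 0 ≤ μ) (hμ1 : μ ≤ 1) {η : V → ℝ}
    (h : ∀ v, 0 ≤ η v ∧ η v ≤ 1) (v : V) :
    0 ≤ upd x y μ η v ∧ upd x y μ η v ≤ 1 := by
  unfold upd
  split_ifs <;> constructor <;>
    nlinarith [(h x).1, (h x).2, (h y).1, (h y).2, (h v).1, (h v).2]

lemma exists_boundary {G : SimpleGraph V} {A : Finset V} {a b : V} (w : G.Walk a b) :
    a ∈ A → b ∉ A → ∃ x y, G.Adj x y ∧ x ∈ A ∧ y ∉ A := by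
  induction w with
  | nil => intro ha hb; exact absurd ha hb
  | @cons c d e h p ih =>
    intro ha hb
    by_cases hd : d ∈ A
    · exact ih hd hb
    · exact ⟨c, d, h, ha, hd⟩

end Aux
set_option maxHeartbeats 1000000 in
theorem max_tendsto_inverse_card {V : Type*} [Fintype V] [Nonempty V] [DecidableEq V]
    (G : SimpleGraph V) (hG : G.Connected)
    (μ : ℝ) (hμ : μ ∈ Set.Ioc (0:ℝ) (1/2))
    (steps : ℕ → V × V) (hadj : ∀ k, G.Adj (steps k).1 (steps k).2)
    (hio : ∀ x y, G.Adj x y → ∀ N, ∃ k, N ≤ k ∧ (steps k = (x, y) ∨ steps k = (y, x)))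
    (u : V) (η : ℕ → V → ℝ) (h0 : η 0 = delta u)
    (hstep : ∀ k, η (k + 1) = upd (steps k).1 (steps k).2 μ (η k)) :
    Tendsto (fun k => ⨆ v, η k v) atTop (nhds (1 / (Fintype.card V : ℝ))) := by
  classical
  set n := Fintype.card V with hn_def
  have hn : 1 ≤ n := Fintype.card_pos
  have hμ0 : 0 < μ := hμ.1
  have hμ2 : μ ≤ 1/2 := hμ.2
  have hμ1 : μ ≤ 1 := by linarith
  have hμnn : 0 ≤ μ := le_of_lt hμ0
  have hne : ∀ k, (steps k).1 ≠ (steps k).2 := fun k => (hadj k).ne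
  -- sum invariant
  have hsum : ∀ k, ∑ v, η k v = 1 := by
    intro k
    induction k with
    | zero => rw [h0]; simp [delta]
    | succ k ih =>
      rw [hstep k, sum_upd_of_mem_mem (hne k) (mem_univ _) (mem_univ _)]
      exact ih
  -- bounds
  have hbd : ∀ k v, 0 ≤ η k v ∧ η k v ≤ 1 := by
    intro k
    induction k with
    | zero => intro v; rw [h0]; unfold delta; split_ifs <;> norm_num
    | succ k ih => rw [hstep k]; exact upd_bounds hμnn hμ1 ih
  -- monotonicity of Smin in time
  have hmono : ∀ j, j ≤ n → Monotone fun k => Smin (η k) j := by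
    intro j hj
    apply monotone_nat_of_le_succ
    intro k
    rw [hstep k]
    exact Smin_le_upd (hne k) hμnn hμ1 hj (η k)
  have hbdd : ∀ j, BddAbove (Set.range fun k => Smin (η k) j) := by
    intro j
    refine ⟨(j : ℝ), ?_⟩
    rintro x ⟨k, rfl⟩
    show Smin (η k) j ≤ (j:ℝ)
    by_cases hj : j ≤ n
    · obtain ⟨T, hTc, hTe⟩ := exists_Smin (η k) hj
      rw [hTe]
      calc ∑ v ∈ T, η k v ≤ ∑ _v ∈ T, (1:ℝ) := Finset.sum_le_sum fun v _ => (hbd k v).2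
        _ = (T.card : ℝ) := by simp
        _ = (j : ℝ) := by rw [hTc]
    · have : ¬ ((univ : Finset V).powersetCard j).Nonempty := by
        rw [Finset.powersetCard_nonempty]
        simpa using hj
      simp only [Smin, dif_neg this]
      positivity
  set L : ℕ → ℝ := fun j => ⨆ k, Smin (η k) j with hL_def
  have htend : ∀ j, j ≤ n → Tendsto (fun k => Smin (η k) j) atTop (nhds (L j)) :=
    fun j hj => tendsto_atTop_ciSup (hmono j hj) (hbdd j)
  have hle : ∀ j, ∀ k, Smin (η k) j ≤ L j :=
    fun j k => le_ciSup (hbdd j) k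
  have hlarge : ∀ j, j ≤ n → ∀ ε : ℝ, 0 < ε → ∃ K, ∀ k, K ≤ k → L j - ε < Smin (η k) j := by
    intro j hj ε hε
    have h1 : L j - ε < ⨆ k, Smin (η k) j := by
      have : L j - ε < L j := by linarith
      exact this
    obtain ⟨K, hK⟩ := exists_lt_of_lt_ciSup h1
    exact ⟨K, fun k hk => lt_of_lt_of_le hK (hmono j hj hk)⟩
  have hS0 : ∀ k, Smin (η k) 0 = 0 := by
    intro k
    apply le_antisymm
    · have : Smin (η k) 0 ≤ ∑ v ∈ (∅ : Finset V), η k v := Smin_le (η k) (by simp)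
      simpa using this
    · apply le_Smin (Nat.zero_le n)
      intro T hT
      rw [Finset.card_eq_zero.1 hT]
      simp
  have hSn : ∀ k, Smin (η k) n = 1 := by
    intro k
    apply le_antisymm
    · have : Smin (η k) n ≤ ∑ v ∈ (univ : Finset V), η k v := Smin_le (η k) (by simp [hn_def])
      rwa [hsum k] at this
    · apply le_Smin le_rfl
      intro T hT
      have : T = univ := Finset.eq_of_subset_of_card_le T.subset_univ (by simp [hT])
      rw [this]
      rw [hsum k]
  have hL0 : L 0 = 0 := by
    simp only [hL_def]
    rw [show (fun k => Smin (η k) 0) = fun _ => (0:ℝ) from funext hS0]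
    exact ciSup_const
  have hLn : L n = 1 := by
    simp only [hL_def]
    rw [show (fun k => Smin (η k) n) = fun _ => (1:ℝ) from funext hSn]
    exact ciSup_const
  have hciSup_le : ∀ (j : ℕ) (b : ℝ), (∀ k, Smin (η k) j ≤ b) → L j ≤ b :=
    fun j b h => ciSup_le h
  clear_value L
  -- MAIN: concavity of L
  have hconc : ∀ i, i + 2 ≤ n → L (i + 2) - L (i + 1) ≤ L (i + 1) - L i := by
    intro i hin
    by_contra hcon
    push_neg at hcon
    set γ : ℝ := (L (i+2) - L (i+1)) - (L (i+1) - L i) with hγdef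
    have hγ : 0 < γ := by rw [hγdef]; linarith
    set θ₁ : ℝ := (L (i+1) - L i) + γ/4 with hθ₁def
    set θ₂ : ℝ := (L (i+2) - L (i+1)) - γ/4 with hθ₂def
    have hθdiff : θ₂ - θ₁ = γ/2 := by rw [hθ₁def, hθ₂def, hγdef]; ring
    set ε' : ℝ := min (γ/8) (μ*γ/4) with hε'def
    have hε'1 : ε' ≤ γ/8 := min_le_left _ _
    have hε'2 : ε' ≤ μ*γ/4 := min_le_right _ _
    have hε'0 : 0 < ε' :=
      lt_min (by linarith) (div_pos (mul_pos hμ0 hγ) (by norm_num))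
    clear_value γ θ₁ θ₂ ε'
    have hθlt : θ₁ < θ₂ := by linarith
    obtain ⟨K1, hK1⟩ := hlarge i (by omega) ε' hε'0
    obtain ⟨K2, hK2⟩ := hlarge (i+1) (by omega) ε' hε'0
    obtain ⟨K3, hK3⟩ := hlarge (i+2) hin ε' hε'0
    set K := max K1 (max K2 K3) with hK_def
    set A : ℕ → Finset V := fun k => univ.filter (fun v => η k v ≤ θ₁) with hA_def
    have hmemA : ∀ k v, v ∈ A k ↔ η k v ≤ θ₁ := by
      intro k v; simp [hA_def]
    clear_value A
    have hstruct : ∀ k, K ≤ k → (A k).card = i + 1 ∧ ∀ v, v ∉ A k → θ₂ ≤ η k v := by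
      intro k hk
      have hSi : L i - ε' < Smin (η k) i := hK1 k (le_trans (le_max_left _ _) hk)
      have hSi1 : L (i+1) - ε' < Smin (η k) (i+1) :=
        hK2 k (le_trans (le_trans (le_max_left _ _) (le_max_right K1 _)) hk)
      have hSi2 : L (i+2) - ε' < Smin (η k) (i+2) :=
        hK3 k (le_trans (le_trans (le_max_right _ _) (le_max_right K1 _)) hk)
      have hA1 : i + 1 ≤ (A k).card := by
        by_contra h
        push_neg at h
        have hhigh : ∀ v, v ∉ A k → θ₁ ≤ η k v := by
          intro v hv
          rw [hmemA] at hv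
          linarith [not_le.1 hv]
        have := Smin_succ_ge (η k) (by omega) (by omega : (A k).card ≤ i) hhigh
        have h2 := hle (i+1) k
        linarith
      set B : Finset V := univ.filter (fun v => η k v < θ₂) with hB_def
      have hB : B.card ≤ i + 1 := by
        by_contra h
        push_neg at h
        have hlow : ∀ v ∈ B, η k v ≤ θ₂ := by
          intro v hv
          simp only [hB_def, Finset.mem_filter] at hv
          linarith [hv.2]
        have := Smin_succ_le (η k) (by omega : i + 1 + 1 ≤ B.card) hlow
        have h2 := hle (i+1) k
        linarith
      have hAB : A k ⊆ B := by
        intro v hv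
        rw [hmemA] at hv
        simp only [hB_def, Finset.mem_filter]
        exact ⟨mem_univ v, by linarith⟩
      have hcard : (A k).card = i + 1 :=
        le_antisymm (le_trans (Finset.card_le_card hAB) hB) hA1
      have hEq : A k = B := Finset.eq_of_subset_of_card_le hAB (by omega)
      refine ⟨hcard, fun v hv => ?_⟩
      rw [hEq] at hv
      simp only [hB_def, Finset.mem_filter, mem_univ, true_and, not_lt] at hv
      exact hv
    have hnocross : ∀ k, K ≤ k → ((steps k).1 ∈ A k ↔ (steps k).2 ∈ A k) := by
      intro k hk
      obtain ⟨hcard, hhigh⟩ := hstruct k hk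
      have hlow : ∀ v ∈ A k, η k v ≤ θ₁ := fun v hv => (hmemA k v).1 hv
      by_contra hiff
      have hkey : Smin (η k) (i+1) + μ * (θ₂ - θ₁) ≤ Smin (η (k+1)) (i+1) := by
        by_cases h1 : (steps k).1 ∈ A k
        · have h2 : (steps k).2 ∉ A k := by tauto
          rw [hstep k]
          exact Smin_jump (η k) hμ0 hμ2 (le_of_lt hθlt) (by omega) (by omega) hcard hlow hhigh h1 h2
        · have h2 : (steps k).2 ∈ A k := by tauto
          rw [hstep k, upd_comm_s12]
          exact Smin_jump (η k) hμ0 hμ2 (le_of_lt hθlt) (by omega) (by omega) hcard hlow hhigh h2 h1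
      have hup : Smin (η (k+1)) (i+1) ≤ L (i+1) := hle (i+1) (k+1)
      have hlo : L (i+1) - ε' < Smin (η k) (i+1) :=
        hK2 k (le_trans (le_trans (le_max_left _ _) (le_max_right K1 _)) hk)
      rw [hθdiff] at hkey
      nlinarith [mul_pos hμ0 hγ]
    have hAsucc : ∀ k, K ≤ k → A (k + 1) = A k := by
      intro k hk
      have hnc := hnocross k hk
      obtain ⟨hcard, hhigh⟩ := hstruct k hk
      ext v
      rw [hmemA, hmemA, hstep k]
      set x := (steps k).1 with hx_def
      set y := (steps k).2 with hy_def
      have hxy : x ≠ y := hne k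
      by_cases hvx : v = x
      · rw [hvx, upd_fst]
        by_cases hxA : x ∈ A k
        · have hyA : y ∈ A k := hnc.1 hxA
          have e1 : η k x ≤ θ₁ := (hmemA k x).1 hxA
          have e2 : η k y ≤ θ₁ := (hmemA k y).1 hyA
          exact iff_of_true (by nlinarith) e1
        · have hyA : y ∉ A k := fun h => hxA (hnc.2 h)
          have e1 : θ₂ ≤ η k x := hhigh x hxA
          have e2 : θ₂ ≤ η k y := hhigh y hyA
          have e3 : ¬ (η k x ≤ θ₁) := fun h => hxA ((hmemA k x).2 h)
          exact iff_of_false (fun h' => by nlinarith) e3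
      · by_cases hvy : v = y
        · rw [hvy, upd_snd hxy]
          by_cases hyA : y ∈ A k
          · have hxA : x ∈ A k := hnc.2 hyA
            have e1 : η k y ≤ θ₁ := (hmemA k y).1 hyA
            have e2 : η k x ≤ θ₁ := (hmemA k x).1 hxA
            exact iff_of_true (by nlinarith) e1
          · have hxA : x ∉ A k := fun h => hyA (hnc.1 h)
            have e1 : θ₂ ≤ η k y := hhigh y hyA
            have e2 : θ₂ ≤ η k x := hhigh x hxA
            have e3 : ¬ (η k y ≤ θ₁) := fun h => hyA ((hmemA k y).2 h)
            exact iff_of_false (fun h' => by nlinarith) e3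
        · rw [upd_other hvx hvy]
    have hAconst : ∀ k, K ≤ k → A k = A K := by
      intro k hk
      induction k, hk using Nat.le_induction with
      | base => rfl
      | succ k hk ih => rw [hAsucc k hk, ih]
    obtain ⟨hcardK, hhighK⟩ := hstruct K le_rfl
    have hAne : (A K).Nonempty := Finset.card_pos.1 (by omega)
    obtain ⟨a, ha⟩ := hAne
    have hAnu : ∃ b, b ∉ A K := by
      by_contra h
      push_neg at h
      have : A K = univ := Finset.eq_univ_iff_forall.2 h
      rw [this, Finset.card_univ] at hcardK
      omega
    obtain ⟨b, hb⟩ := hAnu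
    obtain ⟨w⟩ := hG.preconnected a b
    obtain ⟨x, y, hadjxy, hxA, hyA⟩ := exists_boundary w ha hb
    obtain ⟨k, hkK, hsk⟩ := hio x y hadjxy K
    have hnc := hnocross k hkK
    rw [hAconst k hkK] at hnc
    rcases hsk with h | h <;> rw [h] at hnc <;> simp at hnc
    · exact hyA (hnc.1 hxA)
    · exact hyA (hnc.2 hxA)
  -- increments bounded below by last increment
  obtain ⟨m, hm⟩ : ∃ m, n = m + 1 := ⟨n - 1, by omega⟩
  have hkey : ∀ t i, i + t = m → L (m + 1) - L m ≤ L (i + 1) - L i := by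
    intro t
    induction t with
    | zero =>
      intro i h
      have : i = m := by omega
      rw [this]
    | succ t ih =>
      intro i h
      have h2 := hconc i (by omega)
      have h3 := ih (i + 1) (by omega)
      have : i + 1 + 1 = i + 2 := by omega
      rw [this] at h3
      linarith
  -- L m = 1 - 1/n
  have hsupeq : ∀ k, (⨆ v, η k v) = 1 - Smin (η k) m := by
    intro k
    rw [← Finset.sup'_univ_eq_ciSup]
    have h1 : Smin (η k) m = 1 - univ.sup' univ_nonempty (η k) := by
      apply le_antisymm
      · obtain ⟨v, _, hv⟩ := Finset.exists_mem_eq_sup' univ_nonempty (η k)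
        have hT : (univ.erase v).card = m := by
          rw [Finset.card_erase_of_mem (mem_univ v), Finset.card_univ, ← hn_def]
          omega
        have := Smin_le (η k) hT
        have hsum2 : ∑ w ∈ univ.erase v, η k w + η k v = ∑ w ∈ univ, η k w :=
          Finset.sum_erase_add univ (η k) (mem_univ v)
        rw [hsum k] at hsum2
        rw [hv]
        linarith
      · apply le_Smin (by omega)
        intro T hT
        have hex : ∃ v, v ∉ T := by
          by_contra hc
          push_neg at hc
          have hTu : T = univ := Finset.eq_univ_iff_forall.2 hc
          rw [hTu, Finset.card_univ, ← hn_def] at hT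
          omega
        obtain ⟨v, hv⟩ := hex
        have hTv : T = univ.erase v := by
          apply Finset.eq_of_subset_of_card_le
          · intro t ht
            exact Finset.mem_erase.2 ⟨fun hc => hv (hc ▸ ht), mem_univ t⟩
          · rw [Finset.card_erase_of_mem (mem_univ v), Finset.card_univ, hT, ← hn_def]
            omega
        have hsum2 : ∑ w ∈ univ.erase v, η k w + η k v = ∑ w ∈ univ, η k w :=
          Finset.sum_erase_add univ (η k) (mem_univ v)
        rw [hsum k] at hsum2
        have hvle : η k v ≤ univ.sup' univ_nonempty (η k) := Finset.le_sup' (η k) (mem_univ v)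
        rw [hTv]
        linarith
    rw [h1]
    ring
  have hLm_ub : L m ≤ 1 - 1/(n:ℝ) := by
    apply hciSup_le
    intro k
    have hnpos : (0:ℝ) < (n:ℝ) := by exact_mod_cast Nat.lt_of_lt_of_le Nat.zero_lt_one hn
    have hex : ∃ v, 1/(n:ℝ) ≤ η k v := by
      by_contra hc
      push_neg at hc
      have h1 : ∑ v, η k v < ∑ _v : V, 1/(n:ℝ) :=
        Finset.sum_lt_sum_of_nonempty univ_nonempty fun v _ => hc v
      rw [hsum k, Finset.sum_const, Finset.card_univ, ← hn_def, nsmul_eq_mul,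
        mul_one_div, div_self (ne_of_gt hnpos)] at h1
      exact lt_irrefl _ h1
    obtain ⟨v, hv⟩ := hex
    have hbdd2 : BddAbove (Set.range (η k)) := (Set.finite_range (η k)).bddAbove
    have h5 : η k v ≤ ⨆ w, η k w := le_ciSup hbdd2 v
    linarith [hsupeq k]
  have hLm_lb : 1 - 1/(n:ℝ) ≤ L m := by
    have hsumL : ∑ j ∈ Finset.range (m+1), (L (j+1) - L j) = 1 := by
      rw [Finset.sum_range_sub]
      rw [hL0, ← hm, hLn]
      ring
    have heach : ∀ j ∈ Finset.range (m+1), L (m+1) - L m ≤ L (j+1) - L j :=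
      fun j hj => hkey (m - j) j (by rw [Finset.mem_range] at hj; omega)
    have hsum_ge : (m+1) • (L (m+1) - L m) ≤ ∑ j ∈ Finset.range (m+1), (L (j+1) - L j) := by
      have := Finset.card_nsmul_le_sum (Finset.range (m+1)) (fun j => L (j+1) - L j)
        (L (m+1) - L m) heach
      simpa using this
    rw [hsumL] at hsum_ge
    have hLm1 : L (m+1) = 1 := by rw [← hm]; exact hLn
    rw [hLm1, nsmul_eq_mul] at hsum_ge
    have hnr : ((m:ℝ) + 1) = (n:ℝ) := by rw [hm]; push_cast; ring
    have hnpos : (0:ℝ) < (n:ℝ) := by exact_mod_cast Nat.lt_of_lt_of_le Nat.zero_lt_one hn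
    rw [show ((m+1 : ℕ):ℝ) = (n:ℝ) by push_cast [hm]; ring] at hsum_ge
    have : 1 - L m ≤ 1/(n:ℝ) := by
      rw [le_div_iff₀ hnpos]
      nlinarith
    linarith
  have hLm : 1 - L m = 1/(n:ℝ) := by linarith
  have hfin : Tendsto (fun k => 1 - Smin (η k) m) atTop (nhds (1 - L m)) :=
    tendsto_const_nhds.sub (htend m (by omega))
  rw [hLm] at hfin
  have : (fun k => ⨆ v, η k v) = fun k => 1 - Smin (η k) m := funext hsupeq
  rw [this]
  exact hfin
end

section
/- Optimality of μ = 1/2 for SAD (deterministic version): on a graph G, the supremum over all sequences of at most n updates with parameters μ_k ∈ [0,1/2] of the final water level at a vertex s of the SAD process started from δ_r is attained with all parameters equal to 1/2: for any update sequence ([e₁,μ₁],…,[e_n,μ_n]) there is a sequence using the same edges (possibly with some updates deleted, encoded as μ=0) with all remaining parameters equal to 1/2 achieving at least the same value at s. -/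
open Finset Filter

lemma upd_lin {V : Type*} [DecidableEq V] (u w : V) (μ a b : ℝ) (η ζ : V → ℝ) :
    upd u w μ (fun v => a * η v + b * ζ v) = fun v => a * upd u w μ η v + b * upd u w μ ζ v := by
  funext v; unfold upd; split_ifs <;> ring

lemma applySteps_cons_s17 {V : Type*} [DecidableEq V] (st : V × V × ℝ)
    (rest : List (V × V × ℝ)) (η : V → ℝ) :
    applySteps (st :: rest) η = applySteps rest (upd st.1 st.2.1 st.2.2 η) := rfl

lemma applySteps_lin {V : Type*} [DecidableEq V] (steps : List (V × V × ℝ)) (a b : ℝ)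
    (η ζ : V → ℝ) :
    applySteps steps (fun v => a * η v + b * ζ v)
      = fun v => a * applySteps steps η v + b * applySteps steps ζ v := by
  induction steps generalizing η ζ with
  | nil => rfl
  | cons st rest ih =>
      rw [applySteps_cons_s17, upd_lin, ih, applySteps_cons_s17, applySteps_cons_s17]

lemma upd_zero {V : Type*} [DecidableEq V] (u w : V) (η : V → ℝ) :
    upd u w 0 η = η := by
  funext v; unfold upd; split_ifs <;> subst_vars <;> ring

lemma upd_comb {V : Type*} [DecidableEq V] (u w : V) (μ : ℝ) (η : V → ℝ) :
    upd u w μ η = fun v => (1 - 2*μ) * η v + (2*μ) * upd u w (1/2) η v := by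
  funext v; unfold upd; split_ifs <;> subst_vars <;> ring

lemma sad_key {V : Type*} [DecidableEq V] (s : V) (steps : List (V × V × ℝ))
    (hsteps : ∀ st ∈ steps, st.2.2 ∈ Set.Icc (0:ℝ) (1/2)) (η : V → ℝ) :
    ∃ steps' : List (V × V × ℝ),
      (steps'.map fun st => (st.1, st.2.1)) = (steps.map fun st => (st.1, st.2.1)) ∧
      (∀ st ∈ steps', st.2.2 = 0 ∨ st.2.2 = 1/2) ∧
      applySteps steps η s ≤ applySteps steps' η s := by
  induction steps generalizing η with
  | nil => exact ⟨[], rfl, by simp, le_refl _⟩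
  | cons st rest ih =>
      obtain ⟨u, w, μ⟩ := st
      have hμ : μ ∈ Set.Icc (0:ℝ) (1/2) := (hsteps _ List.mem_cons_self)
      have hrest : ∀ st ∈ rest, st.2.2 ∈ Set.Icc (0:ℝ) (1/2) :=
        fun st hst => hsteps st (List.mem_cons_of_mem _ hst)
      set a := applySteps rest η s with ha
      set b := applySteps rest (upd u w (1/2) η) s with hb
      have hval : applySteps ((u, w, μ) :: rest) η s = (1 - 2*μ) * a + (2*μ) * b := by
        rw [applySteps_cons_s17]
        simp only
        rw [upd_comb, applySteps_lin]
      have h0 : (0:ℝ) ≤ 2*μ := by linarith [hμ.1]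
      have h1 : 2*μ ≤ 1 := by linarith [hμ.2]
      rcases le_total a b with hab | hab
      · -- choose μ' = 1/2
        obtain ⟨rest', he, hp, hle⟩ := ih hrest (upd u w (1/2) η)
        refine ⟨(u, w, 1/2) :: rest', by simp [he], ?_, ?_⟩
        · intro st hst
          rcases List.mem_cons.mp hst with h | h
          · right; rw [h]
          · exact hp st h
        · rw [hval, applySteps_cons_s17]
          calc (1 - 2*μ) * a + (2*μ) * b ≤ (1 - 2*μ) * b + (2*μ) * b := by nlinarith
            _ = b := by ring
            _ ≤ _ := hle
      · -- choose μ' = 0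
        obtain ⟨rest', he, hp, hle⟩ := ih hrest η
        refine ⟨(u, w, 0) :: rest', by simp [he], ?_, ?_⟩
        · intro st hst
          rcases List.mem_cons.mp hst with h | h
          · left; rw [h]
          · exact hp st h
        · rw [hval, applySteps_cons_s17]
          simp only [upd_zero]
          calc (1 - 2*μ) * a + (2*μ) * b ≤ (1 - 2*μ) * a + (2*μ) * a := by nlinarith
            _ = a := by ring
            _ ≤ _ := hle

theorem sad_half_optimal {V : Type*} [DecidableEq V] (G : SimpleGraph V) (r s : V)
    (steps : List (V × V × ℝ))
    (hsteps : ∀ st ∈ steps, G.Adj st.1 st.2.1 ∧ st.2.2 ∈ Set.Icc (0:ℝ) (1/2)) :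
    ∃ steps' : List (V × V × ℝ),
      (steps'.map fun st => (st.1, st.2.1)) = (steps.map fun st => (st.1, st.2.1)) ∧
      (∀ st ∈ steps', st.2.2 = 0 ∨ st.2.2 = 1/2) ∧
      applySteps steps (delta r) s ≤ applySteps steps' (delta r) s :=
  sad_key s steps (fun st hst => (hsteps st hst).2) (delta r)
end
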